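/- arXiv:1506.00226 — 2 statements merged into one kernel-verified Lean document; each statement's English description precedes it below -/
import Mathlib

section
/- Let a, b > 0 and v ∈ (0, 1) with 1/2 < v < 1. Then (1 − v)a + v·b ≥ (1 − v)(√a − √b)² + r₁(⁴√(ab) − √b)² + K(⁴√h, 2)^{r̂₁} · a^{1−v} b^{v}, where h = b/a, r = min{v, 1 − v}, r₁ = min{2r, 1 − 2r} and r̂₁ = min{2r₁, 1 − 2r₁}. -/
/-!
Write `a = x⁴`, `b = y⁴`. Then `(1 - v) a + v b - (1 - v)(√a - √b)² - r₁(⁴√(ab) - √b)²` is, with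
`t = 2 r₁ ∈ [0, 1]`, either `x y² ((1 - t) x + t y)` (for `v ≤ 3/4`) or `y³ ((1 - t) y + t x)`
(for `v ≥ 3/4`). The weighted arithmetic mean in both is bounded below by the Zuo–Shi–Fujii
refinement `K(q/p, 2)^{min(t, 1-t)} p^{1-t} q^t ≤ (1 - t) p + t q` of Young's inequality, which
in turn is weighted AM–GM applied to `p` and `(p + q)/2`, using `((p + q)/2)² = K(q/p, 2) p q`.
-/

/-- The Kantorovich constant `K(t, 2) = (t + 1)^2 / (4 t)`. -/
noncomputable def Kant (t : ℝ) : ℝ := (t + 1) ^ 2 / (4 * t)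

lemma kant_pos {t : ℝ} (ht : 0 < t) : 0 < Kant t := by
  unfold Kant; positivity

lemma kant_inv {t : ℝ} (ht : 0 < t) : Kant t⁻¹ = Kant t := by
  unfold Kant
  field_simp
  ring

lemma kant_div_comm {p q : ℝ} (hp : 0 < p) (hq : 0 < q) : Kant (p / q) = Kant (q / p) := by
  rw [← inv_div, kant_inv (div_pos hq hp)]

lemma kant_mul_mul_eq_sq {p q : ℝ} (hp : 0 < p) (hq : 0 < q) :
    Kant (q / p) * (p * q) = ((p + q) / 2) ^ 2 := by
  unfold Kant
  field_simp
  ring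

lemma kant_rpow_mul_le_of_le_half {p q t : ℝ} (hp : 0 < p) (hq : 0 < q) (ht₀ : 0 ≤ t)
    (ht : t ≤ 1 / 2) :
    Kant (q / p) ^ t * (p ^ (1 - t) * q ^ t) ≤ (1 - t) * p + t * q := by
  have hK := kant_pos (div_pos hq hp)
  have hmean : ((p + q) / 2) ^ (2 * t) = Kant (q / p) ^ t * (p ^ t * q ^ t) := by
    rw [Real.rpow_mul (by positivity), Real.rpow_two, ← kant_mul_mul_eq_sq hp hq,
      Real.mul_rpow hK.le (by positivity), Real.mul_rpow hp.le hq.le]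
  have hp_pow : p ^ (1 - 2 * t) * p ^ t = p ^ (1 - t) := by
    rw [← Real.rpow_add hp]; ring_nf
  calc Kant (q / p) ^ t * (p ^ (1 - t) * q ^ t)
      = p ^ (1 - 2 * t) * ((p + q) / 2) ^ (2 * t) := by rw [hmean, ← hp_pow]; ring
    _ ≤ (1 - 2 * t) * p + 2 * t * ((p + q) / 2) :=
      Real.geom_mean_le_arith_mean2_weighted (by linarith) (by linarith) hp.le
        (by positivity) (by ring)
    _ = (1 - t) * p + t * q := by ring

lemma kant_rpow_min_mul_le {p q t : ℝ} (hp : 0 < p) (hq : 0 < q) (ht₀ : 0 ≤ t) (ht₁ : t ≤ 1) :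
    Kant (q / p) ^ min t (1 - t) * (p ^ (1 - t) * q ^ t) ≤ (1 - t) * p + t * q := by
  rcases le_total t (1 / 2) with ht | ht
  · rw [min_eq_left (by linarith)]
    exact kant_rpow_mul_le_of_le_half hp hq ht₀ ht
  · rw [min_eq_right (by linarith), ← kant_div_comm hp hq]
    have := kant_rpow_mul_le_of_le_half hq hp (t := 1 - t) (by linarith) (by linarith)
    rw [sub_sub_cancel] at this
    linarith [mul_comm (p ^ (1 - t)) (q ^ t)]

section SecondRefinement

variable {x y v : ℝ}

lemma young_kant_second_refinement_of_le (hx : 0 < x) (hy : 0 < y) (hv₀ : 1 / 2 ≤ v)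
    (hv₁ : v ≤ 3 / 4) :
    (1 - v) * (x ^ 2 - y ^ 2) ^ 2 + (2 * v - 1) * (x * y - y ^ 2) ^ 2
        + Kant (y / x) ^ min (2 * (2 * v - 1)) (1 - 2 * (2 * v - 1))
          * (x ^ (4 * (1 - v)) * y ^ (4 * v))
      ≤ (1 - v) * x ^ 4 + v * y ^ 4 := by
  set t := 2 * (2 * v - 1)
  have hpow : x ^ (4 * (1 - v)) * y ^ (4 * v) = x * y ^ 2 * (x ^ (1 - t) * y ^ t) := by
    rw [show 4 * (1 - v) = 1 + (1 - t) by ring, show 4 * v = 2 + t by ring,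
      Real.rpow_add hx, Real.rpow_add hy, Real.rpow_one, Real.rpow_two]
    ring
  have hyoung := kant_rpow_min_mul_le hx hy (t := t) (by linarith) (by linarith)
  have hxy : 0 < x * y ^ 2 := by positivity
  rw [hpow]
  nlinarith [mul_le_mul_of_nonneg_left hyoung hxy.le]

lemma young_kant_second_refinement_of_ge (hx : 0 < x) (hy : 0 < y) (hv₀ : 3 / 4 ≤ v)
    (hv₁ : v ≤ 1) :
    (1 - v) * (x ^ 2 - y ^ 2) ^ 2 + (2 - 2 * v) * (x * y - y ^ 2) ^ 2
        + Kant (y / x) ^ min (2 * (2 - 2 * v)) (1 - 2 * (2 - 2 * v))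
          * (x ^ (4 * (1 - v)) * y ^ (4 * v))
      ≤ (1 - v) * x ^ 4 + v * y ^ 4 := by
  set t := 2 * (2 - 2 * v)
  have hpow : x ^ (4 * (1 - v)) * y ^ (4 * v) = y ^ 3 * (y ^ (1 - t) * x ^ t) := by
    rw [show 4 * (1 - v) = t by ring, show 4 * v = 3 + (1 - t) by ring,
      Real.rpow_add hy, show (3 : ℝ) = (3 : ℕ) by norm_num, Real.rpow_natCast]
    ring
  have hyoung := kant_rpow_min_mul_le hy hx (t := t) (by linarith) (by linarith)
  rw [kant_div_comm hx hy] at hyoung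
  have hy3 : 0 < y ^ 3 := by positivity
  rw [hpow]
  nlinarith [mul_le_mul_of_nonneg_left hyoung hy3.le]

end SecondRefinement

lemma exists_pos_eq_pow_four {a : ℝ} (ha : 0 < a) : ∃ x, 0 < x ∧ a = x ^ 4 :=
  ⟨a ^ ((4 : ℕ) : ℝ)⁻¹, by positivity, (Real.rpow_inv_natCast_pow ha.le (by norm_num)).symm⟩

lemma rpow_one_fourth_pow_four {x : ℝ} (hx : 0 ≤ x) : (x ^ 4) ^ ((1 : ℝ) / 4) = x := by
  rw [one_div, show (4 : ℝ) = (4 : ℕ) by norm_num, Real.pow_rpow_inv_natCast hx (by norm_num)]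

theorem stmt_1 (a b v : ℝ) (ha : 0 < a) (hb : 0 < b) (hv0 : 1 / 2 < v) (hv : v < 1)
    (h r r1 rh1 : ℝ) (hh : h = b / a) (hr : r = min v (1 - v))
    (hr1 : r1 = min (2 * r) (1 - 2 * r)) (hrh1 : rh1 = min (2 * r1) (1 - 2 * r1)) :
    (1 - v) * a + v * b ≥
      (1 - v) * (Real.sqrt a - Real.sqrt b) ^ 2
        + r1 * ((a * b) ^ ((1 : ℝ) / 4) - Real.sqrt b) ^ 2
        + Kant (h ^ ((1 : ℝ) / 4)) ^ rh1 * (a ^ (1 - v) * b ^ v) := by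
  obtain ⟨x, hx, rfl⟩ := exists_pos_eq_pow_four ha
  obtain ⟨y, hy, rfl⟩ := exists_pos_eq_pow_four hb
  have hsqrt {z : ℝ} : Real.sqrt (z ^ 4) = z ^ 2 := by
    rw [show z ^ 4 = (z ^ 2) ^ 2 by ring, Real.sqrt_sq (sq_nonneg z)]
  have hpow {z : ℝ} (hz : 0 < z) (s : ℝ) : (z ^ 4) ^ s = z ^ (4 * s) := by
    rw [show (4 : ℝ) = (4 : ℕ) by norm_num, Real.rpow_natCast_mul hz.le]
  have hr' : r = 1 - v := by rw [hr, min_eq_right (by linarith)]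
  rw [hh, hsqrt, hsqrt, ← mul_pow, ← div_pow, rpow_one_fourth_pow_four (by positivity),
    rpow_one_fourth_pow_four (by positivity), hpow hx, hpow hy, hrh1, ge_iff_le]
  rcases le_total v (3 / 4) with hv34 | hv34
  · obtain rfl : r1 = 2 * v - 1 := by rw [hr1, hr', min_eq_right (by linarith)]; ring
    exact young_kant_second_refinement_of_le hx hy hv0.le hv34
  · obtain rfl : r1 = 2 - 2 * v := by rw [hr1, hr', min_eq_left (by linarith)]; ring
    exact young_kant_second_refinement_of_ge hx hy hv34 hv.le
end

section
/- Let a, b > 0 and v ∈ (0, 1). Then (a + b)/2 ≥ r(√a − √b)² + (1/2)·r₁·[(⁴√(ab) − √a)² + (⁴√(ab) − √b)²] + K(⁴√h, 2)^{r̂₁} · H_v(a, b), where h = b/a, r = min{v, 1 − v}, r₁ = min{2r, 1 − 2r} and r̂₁ = min{2r₁, 1 − 2r₁}. -/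
open Real

lemma Kant_inv (t : ℝ) : Kant t⁻¹ = Kant t := by
  rcases eq_or_ne t 0 with rfl | ht
  · simp
  · unfold Kant
    field_simp
    ring

lemma Kant_div_comm (x y : ℝ) : Kant (x / y) = Kant (y / x) := by
  rw [← inv_div, Kant_inv]

lemma Kant_div_eq {x y : ℝ} (hx : 0 < x) (hy : 0 < y) :
    Kant (y / x) = ((x + y) / 2) ^ 2 / (x * y) := by
  unfold Kant
  field_simp
  ring

lemma Kant_div_rpow_mul_geom_mean {x y : ℝ} (hx : 0 < x) (hy : 0 < y) (μ : ℝ) :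
    Kant (y / x) ^ μ * (x ^ (1 - μ) * y ^ μ) = x ^ (1 - 2 * μ) * ((x + y) / 2) ^ (2 * μ) := by
  have hm : 0 < (x + y) / 2 := by positivity
  rw [Kant_div_eq hx hy, div_rpow (by positivity) (by positivity), mul_rpow hx.le hy.le,
    ← rpow_natCast_mul hm.le, rpow_sub hx, rpow_sub hx]
  push_cast
  field_simp
  rw [← rpow_mul_natCast hx.le]
  ring_nf

lemma Kant_rpow_mul_geom_mean_le_of_le_half {x y μ : ℝ} (hx : 0 < x) (hy : 0 < y)
    (hμ0 : 0 ≤ μ) (hμ : μ ≤ 1 / 2) :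
    Kant (y / x) ^ μ * (x ^ (1 - μ) * y ^ μ) ≤ (1 - μ) * x + μ * y := by
  rw [Kant_div_rpow_mul_geom_mean hx hy]
  calc x ^ (1 - 2 * μ) * ((x + y) / 2) ^ (2 * μ)
      ≤ (1 - 2 * μ) * x + 2 * μ * ((x + y) / 2) :=
        geom_mean_le_arith_mean2_weighted (by linarith) (by linarith) hx.le (by positivity)
          (by ring)
    _ = (1 - μ) * x + μ * y := by ring

lemma Kant_rpow_mul_geom_mean_le {x y μ : ℝ} (hx : 0 < x) (hy : 0 < y)
    (hμ0 : 0 ≤ μ) (hμ1 : μ ≤ 1) :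
    Kant (y / x) ^ min μ (1 - μ) * (x ^ (1 - μ) * y ^ μ) ≤ (1 - μ) * x + μ * y := by
  wlog hμ : μ ≤ 1 / 2 generalizing x y μ
  · have := this (μ := 1 - μ) hy hx (by linarith) (by linarith) (by linarith)
    rwa [sub_sub_cancel, min_comm, Kant_div_comm, mul_comm (y ^ _), add_comm] at this
  rw [min_eq_left (by linarith)]
  exact Kant_rpow_mul_geom_mean_le_of_le_half hx hy hμ0 hμ

lemma sq_rpow_mul_mul_rpow {p q : ℝ} (hp : 0 < p) (hq : 0 < q) (v : ℝ) :
    (p ^ 2) ^ (1 - 2 * v) * (p * q) ^ (2 * v) = (p ^ 2) ^ (1 - v) * (q ^ 2) ^ v := by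
  rw [mul_rpow hp.le hq.le, ← rpow_natCast_mul hp.le, ← rpow_natCast_mul hp.le,
    ← rpow_natCast_mul hq.le, ← mul_assoc, ← rpow_add hp]
  push_cast
  ring_nf

lemma sq_young_refined_le {s t l : ℝ} (hs : 0 < s) (ht : 0 < t) (hl0 : 0 ≤ l) (hl1 : l ≤ 1) :
    min l (1 - l) * (s - t) ^ 2
        + Kant (t / s) ^ min (2 * min l (1 - l)) (1 - 2 * min l (1 - l))
          * ((s ^ 2) ^ (1 - l) * (t ^ 2) ^ l)
      ≤ (1 - l) * s ^ 2 + l * t ^ 2 := by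
  wlog hl : l ≤ 1 / 2 generalizing s t l
  · have := this (l := 1 - l) ht hs (by linarith) (by linarith) (by linarith)
    rwa [sub_sub_cancel, min_comm, Kant_div_comm, mul_comm ((t ^ 2) ^ _), add_comm (l * _),
      ← neg_sub s t, neg_sq] at this
  have key := Kant_rpow_mul_geom_mean_le (x := s ^ 2) (y := s * t) (μ := 2 * l)
    (by positivity) (by positivity) (by linarith) (by linarith)
  rw [show s * t / s ^ 2 = t / s by field_simp, mul_assoc,
    sq_rpow_mul_mul_rpow hs ht] at key
  rw [min_eq_left (by linarith)]
  linear_combination key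

lemma heinz_refined_le_pow_four {x y v : ℝ} (hx : 0 < x) (hy : 0 < y)
    (hv0 : 0 ≤ v) (hv1 : v ≤ 1) :
    min v (1 - v) * (x ^ 2 - y ^ 2) ^ 2
        + 1 / 2 * min (2 * min v (1 - v)) (1 - 2 * min v (1 - v))
          * ((x * y - x ^ 2) ^ 2 + (x * y - y ^ 2) ^ 2)
        + Kant (y / x) ^ min (2 * min (2 * min v (1 - v)) (1 - 2 * min v (1 - v)))
            (1 - 2 * min (2 * min v (1 - v)) (1 - 2 * min v (1 - v)))
          * (((x ^ 4) ^ v * (y ^ 4) ^ (1 - v) + (x ^ 4) ^ (1 - v) * (y ^ 4) ^ v) / 2)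
      ≤ (x ^ 4 + y ^ 4) / 2 := by
  wlog hv : v ≤ 1 / 2 generalizing v
  · have := this (v := 1 - v) (by linarith) (by linarith) (by linarith)
    rwa [sub_sub_cancel, min_comm, add_comm ((x ^ 4) ^ (1 - v) * _)] at this
  rw [min_eq_left (by linarith)]
  have hx2 : 0 < x ^ 2 := by positivity
  have hy2 : 0 < y ^ 2 := by positivity
  have hxy := sq_young_refined_le (s := x ^ 2) (t := x * y) (l := 2 * v) hx2 (by positivity)
    (by linarith) (by linarith)
  have hyx := sq_young_refined_le (s := y ^ 2) (t := x * y) (l := 2 * v) hy2 (by positivity)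
    (by linarith) (by linarith)
  rw [show x * y / x ^ 2 = y / x by field_simp, mul_pow, sq_rpow_mul_mul_rpow hx2 hy2,
    ← pow_mul, ← pow_mul] at hxy
  rw [show x * y / y ^ 2 = x / y by field_simp, Kant_div_comm,
    show (x * y) ^ 2 = y ^ 2 * x ^ 2 by ring, sq_rpow_mul_mul_rpow hy2 hx2, ← pow_mul,
    ← pow_mul] at hyx
  linear_combination (hxy + hyx) / 2

theorem stmt_2 (a b v : ℝ) (ha : 0 < a) (hb : 0 < b) (hv0 : 0 < v) (hv : v < 1)
    (h r r1 rh1 : ℝ) (hh : h = b / a) (hr : r = min v (1 - v))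
    (hr1 : r1 = min (2 * r) (1 - 2 * r)) (hrh1 : rh1 = min (2 * r1) (1 - 2 * r1)) :
    (a + b) / 2 ≥
      r * (Real.sqrt a - Real.sqrt b) ^ 2
        + 1 / 2 * r1 * (((a * b) ^ ((1 : ℝ) / 4) - Real.sqrt a) ^ 2
            + ((a * b) ^ ((1 : ℝ) / 4) - Real.sqrt b) ^ 2)
        + Kant (h ^ ((1 : ℝ) / 4)) ^ rh1 * ((a ^ v * b ^ (1 - v) + a ^ (1 - v) * b ^ v) / 2) := by
  subst hh hr hr1 hrh1
  have fourth_root : ∀ {c : ℝ}, 0 < c → ∃ x > 0, c = x ^ 4 := fun {c} hc =>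
    ⟨c ^ ((4 : ℕ) : ℝ)⁻¹, by positivity, (rpow_inv_natCast_pow hc.le four_ne_zero).symm⟩
  have root_pow_four : ∀ {z : ℝ}, 0 < z → (z ^ 4) ^ ((1 : ℝ) / 4) = z := fun {z} hz => by
    rw [one_div]; exact_mod_cast pow_rpow_inv_natCast hz.le four_ne_zero
  have sqrt_pow_four : ∀ z : ℝ, √(z ^ 4) = z ^ 2 := fun z => by
    rw [show z ^ 4 = (z ^ 2) ^ 2 by ring]; exact sqrt_sq (by positivity)
  obtain ⟨x, hx, rfl⟩ := fourth_root ha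
  obtain ⟨y, hy, rfl⟩ := fourth_root hb
  rw [← mul_pow, ← div_pow, root_pow_four (mul_pos hx hy), root_pow_four (div_pos hy hx),
    sqrt_pow_four, sqrt_pow_four]
  exact heinz_refined_le_pow_four hx hy hv0.le hv.le
end
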